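/- The full group G = S_h × S_n × Ω is regular if and only if S_h × S_n × {id} is regular, if and only if gcd(h, n!) = 1. -/

import Mathlib

/-- A preference profile: each individual `i : Fin h` has a linear order on the `n`
alternatives, identified with the permutation of `Fin n` mapping ranks to alternatives. -/
abbrev Profile (h n : Nat) := Fin h → Equiv.Perm (Fin n)

/-- The order-reversing permutation `ρ₀`. -/
def rho0 (n : Nat) : Equiv.Perm (Fin n) := Fin.revPerm

/-- The subgroup `Ω = {id, ρ₀}` of `S_n` (generated by `ρ₀`, which has order 2). -/
def Omega (n : Nat) : Subgroup (Equiv.Perm (Fin n)) := Subgroup.zpowers (rho0 n)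

/-- `ρ₀` as an element of `Ω`. -/
def omegaRho0 (n : Nat) : Omega n := ⟨rho0 n, Subgroup.mem_zpowers _⟩

/-- The group `G = S_h × S_n × Ω`. -/
abbrev GG (h n : Nat) := Equiv.Perm (Fin h) × Equiv.Perm (Fin n) × (Omega n)

/-- The action of `(φ, ψ, ρ) ∈ G` on a profile: `(p^{(φ,ψ,ρ)})_i = ψ p_{φ⁻¹(i)} ρ`. -/
def act {h n : Nat} (g : GG h n) (p : Profile h n) : Profile h n :=
  fun i => g.2.1 * p (g.1⁻¹ i) * (g.2.2 : Equiv.Perm (Fin n))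

/-- A rule `F` is `U`-symmetric if `F(p^{(φ,ψ,ρ)}) = ψ F(p) ρ` for all `p` and `(φ,ψ,ρ) ∈ U`. -/
def USymm {h n : Nat} (U : Set (GG h n)) (F : Profile h n → Equiv.Perm (Fin n)) : Prop :=
  ∀ p : Profile h n, ∀ g ∈ U, F (act g p) = g.2.1 * F p * (g.2.2 : Equiv.Perm (Fin n))

/-- `S₁^U(p) = { q : ψ q ρ = q for all (φ,ψ,ρ) in the stabilizer of p in U }`. -/
def S1set {h n : Nat} (U : Set (GG h n)) (p : Profile h n) : Set (Equiv.Perm (Fin n)) :=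
  {q | ∀ g ∈ U, act g p = p → g.2.1 * q * (g.2.2 : Equiv.Perm (Fin n)) = q}

/-- Regularity of `U`: for every profile `p` there is `ψ*` conjugate to `ρ₀` with
`Stab_U(p) ⊆ (S_h × {id} × {id}) ∪ (S_h × {ψ*} × {ρ₀})`. -/
def Regular {h n : Nat} (U : Set (GG h n)) : Prop :=
  ∀ p : Profile h n, ∃ ψs : Equiv.Perm (Fin n), IsConj (rho0 n) ψs ∧
    ∀ g ∈ U, act g p = p →
      (g.2.1 = 1 ∧ (g.2.2 : Equiv.Perm (Fin n)) = 1) ∨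
      (g.2.1 = ψs ∧ (g.2.2 : Equiv.Perm (Fin n)) = rho0 n)

/-- Number of individuals strictly preferring `x` to `y` in profile `p`
(smaller rank = better, since permutations send ranks to alternatives). -/
def prefCount {h n : Nat} (p : Profile h n) (x y : Fin n) : Nat :=
  (Finset.univ.filter fun i => (p i)⁻¹ x < (p i)⁻¹ y).card

/-- `C_ν(p)`: linear orders consistent with the `ν`-majority principle applied to `p`. -/
def Cset {h n : Nat} (p : Profile h n) (ν : Nat) : Set (Equiv.Perm (Fin n)) :=
  {q | ∀ x y : Fin n, ν ≤ prefCount p x y → q⁻¹ x < q⁻¹ y}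

/-- `ν(p)`: the minimal majority threshold `ν ∈ ℕ ∩ (h/2, h]` with `C_ν(p) ≠ ∅`. -/
noncomputable def nuMin {h n : Nat} (p : Profile h n) : Nat :=
  sInf {ν : Nat | h < 2 * ν ∧ ν ≤ h ∧ (Cset p ν).Nonempty}

/-- minimal majority rule. -/
def MinMaj {h n : Nat} (F : Profile h n → Equiv.Perm (Fin n)) : Prop :=
  ∀ p : Profile h n, F p ∈ Cset p (nuMin p)

/-- `gcd(T(φ))`: the gcd of the lengths of the orbits (cycles) of `φ`. -/
noncomputable def gcdOrbits {h : Nat} (phi : Equiv.Perm (Fin h)) : Nat :=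
  Finset.univ.gcd fun i => Function.minimalPeriod (⇑phi) i

/-! If `(φ, ψ, ρ)` fixes `p`, then along a cycle of `φ` of length `ℓ` through `j` we get
`p_j = ψ^ℓ p_j ρ^ℓ`. For `ρ = id` this makes the order of `ψ` divide every cycle length, hence
`h`, so `ψ = id` once `gcd(h, n!) = 1`. The product of two stabilisers with `ρ = ρ₀` has
`ρ = id`, so all of them share one involution `ψ`; as `2 ∣ n!`, `h` is odd and `φ` has an odd
cycle, on which `p_j = ψ p_j ρ₀` exhibits `ψ` as a conjugate of `ρ₀`. Conversely, if a prime
divides both `h` and `n!`, Cauchy's theorem gives `ψ ≠ id` with `ψ^h = 1`, and the profile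
`p_i = ψ^i` is fixed by `(i ↦ i + 1, ψ, id)`. -/

open Equiv Function

namespace Equiv.Perm

variable {α : Type*} [Fintype α]

theorem dvd_card_of_forall_dvd_minimalPeriod (φ : Perm α) {d : ℕ}
    (hd : ∀ x, d ∣ minimalPeriod φ x) : d ∣ Fintype.card α := by
  classical
  rw [Fintype.card_congr (MulAction.selfEquivSigmaOrbits (Subgroup.zpowers φ) α),
    Fintype.card_sigma]
  refine Finset.dvd_sum fun ω _ => ?_
  rw [← MulAction.minimalPeriod_eq_card]
  exact hd _

theorem exists_odd_minimalPeriod (φ : Perm α) (hα : Odd (Fintype.card α)) :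
    ∃ x, Odd (minimalPeriod φ x) := by
  by_contra! hall
  have h2 : 2 ∣ Fintype.card α := dvd_card_of_forall_dvd_minimalPeriod φ fun x =>
    (Nat.not_odd_iff_even.1 (hall x)).two_dvd
  exact Nat.not_even_iff_odd.2 hα (even_iff_two_dvd.2 h2)

end Equiv.Perm

section Twisted

variable {α : Type*} {φ : Perm α}

theorem apply_pow_apply_of_twisted {M : Type*} [Monoid M] {f : α → M} {a b : M}
    (hf : ∀ x, f (φ x) = a * f x * b) (k : ℕ) (x : α) :
    f ((φ ^ k) x) = a ^ k * f x * b ^ k := by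
  induction k with
  | zero => simp
  | succ k ih => rw [pow_succ', Perm.mul_apply, hf, ih, pow_succ', pow_succ]; group

theorem pow_minimalPeriod_mul_mul_pow {M : Type*} [Monoid M] {f : α → M} {a b : M}
    (hf : ∀ x, f (φ x) = a * f x * b) (x : α) :
    a ^ minimalPeriod φ x * f x * b ^ minimalPeriod φ x = f x := by
  rw [← apply_pow_apply_of_twisted hf, Perm.coe_pow]
  exact congrArg f (isPeriodicPt_minimalPeriod φ x)

variable [Fintype α] {G : Type*} [Group G] {f : α → G} {a b : G}

theorem pow_card_eq_one_of_apply_eq_mul (hf : ∀ x, f (φ x) = a * f x) :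
    a ^ Fintype.card α = 1 := by
  have hf' : ∀ x, f (φ x) = a * f x * 1 := by simpa using hf
  refine orderOf_dvd_iff_pow_eq_one.1 (Perm.dvd_card_of_forall_dvd_minimalPeriod φ fun x => ?_)
  refine orderOf_dvd_of_pow_eq_one (mul_right_cancel (b := f x) ?_)
  simpa using pow_minimalPeriod_mul_mul_pow hf' x

theorem pow_eq_self_of_odd {M : Type*} [Monoid M] {a : M} (ha : a * a = 1) {k : ℕ}
    (hk : Odd k) : a ^ k = a := by
  obtain ⟨t, rfl⟩ := hk
  rw [pow_succ, pow_mul, sq, ha, one_pow, one_mul]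

theorem isConj_of_twisted_of_odd_card (hf : ∀ x, f (φ x) = a * f x * b) (ha : a * a = 1)
    (hb : b * b = 1) (hα : Odd (Fintype.card α)) : IsConj b a := by
  obtain ⟨x, hx⟩ := Perm.exists_odd_minimalPeriod φ hα
  have hfix := pow_minimalPeriod_mul_mul_pow hf x
  rw [pow_eq_self_of_odd ha hx, pow_eq_self_of_odd hb hx] at hfix
  refine isConj_iff.2 ⟨f x, mul_inv_eq_of_eq_mul ?_⟩
  calc f x * b = a * f x * b * b := by rw [hfix]
    _ = a * f x := by rw [mul_assoc, hb, mul_one]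

end Twisted

theorem eq_one_of_pow_eq_one_of_coprime_card {G : Type*} [Group G] {g : G} {k : ℕ}
    (hk : k.Coprime (Nat.card G)) (hg : g ^ k = 1) : g = 1 := by
  simpa [hk.gcd_eq_one] using pow_gcd_eq_one.2 ⟨hg, pow_card_eq_one'⟩

theorem exists_ne_one_pow_eq_one_of_not_coprime_card {G : Type*} [Group G] [Finite G] {k : ℕ}
    (hk : ¬ k.Coprime (Nat.card G)) :
    ∃ g : G, g ≠ 1 ∧ g ^ k = 1 := by
  obtain ⟨q, hq, hqk, hqG⟩ := Nat.Prime.not_coprime_iff_dvd.1 hk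
  have := Fact.mk hq
  obtain ⟨g, hg⟩ := exists_prime_orderOf_dvd_card' q hqG
  refine ⟨g, fun h1 => hq.one_lt.ne' ?_, orderOf_dvd_iff_pow_eq_one.1 (hg ▸ hqk)⟩
  rw [← hg, h1, orderOf_one]

theorem rho0_mul_self (n : ℕ) : rho0 n * rho0 n = 1 := by
  ext i
  simp [rho0]

theorem rho0_ne_one {n : ℕ} (hn : 2 ≤ n) : rho0 n ≠ 1 := by
  intro h1
  have h0 := congrArg Fin.val (Equiv.ext_iff.1 h1 ⟨0, by omega⟩)
  simp only [rho0, Fin.revPerm_apply, Fin.val_rev, Perm.one_apply] at h0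
  omega

theorem Omega.coe_eq_one_or_eq_rho0 {n : ℕ} (ρ : Omega n) :
    (ρ : Perm (Fin n)) = 1 ∨ (ρ : Perm (Fin n)) = rho0 n := by
  obtain ⟨k, hk⟩ := Subgroup.mem_zpowers_iff.1 ρ.2
  rw [← hk]
  rcases k.even_or_odd with ⟨m, rfl⟩ | ⟨m, rfl⟩
  · left
    rw [← two_mul, zpow_mul, zpow_two, rho0_mul_self, one_zpow]
  · right
    rw [zpow_add, zpow_mul, zpow_two, rho0_mul_self, one_zpow, one_mul, zpow_one]

theorem Omega.commute {n : ℕ} (ρ ρ' : Omega n) : Commute (ρ : Perm (Fin n)) ρ' := by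
  rcases Omega.coe_eq_one_or_eq_rho0 ρ with h | h <;>
    rcases Omega.coe_eq_one_or_eq_rho0 ρ' with h' | h' <;> simp [h, h', Commute.refl]

section Action

variable {h n : ℕ}

theorem act_mul (g g' : GG h n) (p : Profile h n) : act (g * g') p = act g (act g' p) := by
  funext i
  simp only [act, Prod.fst_mul, Prod.snd_mul, Subgroup.coe_mul, mul_inv_rev, Perm.mul_apply]
  rw [(Omega.commute g.2.2 g'.2.2).eq]
  group

theorem act_eq_self_iff {g : GG h n} {p : Profile h n} :
    act g p = p ↔ ∀ j, p (g.1 j) = g.2.1 * p j * g.2.2 := by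
  refine ⟨fun hg j => ?_, fun hg => funext fun i => ?_⟩
  · conv_lhs => rw [← hg]
    simp [act]
  · simp [act, ← hg]

theorem Regular.mono {U V : Set (GG h n)} (hUV : U ⊆ V) (hV : Regular V) : Regular U :=
  fun p => (hV p).imp fun _ ⟨hconj, hstab⟩ => ⟨hconj, fun g hg => hstab g (hUV hg)⟩

end Action

section Coprime

variable {h n : ℕ} {p : Profile h n} {g g' : GG h n}

theorem snd_fst_eq_one_of_act_eq_self (hcop : h.Coprime n.factorial) (hg : act g p = p)
    (hρ : (g.2.2 : Perm (Fin n)) = 1) : g.2.1 = 1 := by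
  have hψ : g.2.1 ^ h = 1 := by
    simpa using pow_card_eq_one_of_apply_eq_mul (f := p) (φ := g.1) fun j => by
      simpa [hρ] using act_eq_self_iff.1 hg j
  exact eq_one_of_pow_eq_one_of_coprime_card (by rwa [Nat.card_perm, Nat.card_fin]) hψ

theorem snd_fst_mul_eq_one_of_act_eq_self (hcop : h.Coprime n.factorial) (hg : act g p = p)
    (hg' : act g' p = p) (hρ : (g.2.2 : Perm (Fin n)) = rho0 n)
    (hρ' : (g'.2.2 : Perm (Fin n)) = rho0 n) :
    g.2.1 * g'.2.1 = 1 :=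
  snd_fst_eq_one_of_act_eq_self hcop (g := g * g') (by rw [act_mul, hg', hg])
    (by simp [hρ, hρ', rho0_mul_self])

theorem isConj_rho0_of_act_eq_self (hcop : h.Coprime n.factorial) (hn : 2 ≤ n)
    (hg : act g p = p) (hρ : (g.2.2 : Perm (Fin n)) = rho0 n) : IsConj (rho0 n) g.2.1 := by
  have hodd : Odd h := (hcop.coprime_dvd_right (Nat.dvd_factorial two_pos hn)).odd_of_right
  refine isConj_of_twisted_of_odd_card (f := p) (φ := g.1) (fun j => ?_)
    (snd_fst_mul_eq_one_of_act_eq_self hcop hg hg hρ hρ) (rho0_mul_self n) (by simpa using hodd)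
  rw [act_eq_self_iff.1 hg j, hρ]

theorem regular_univ_of_coprime (hcop : h.Coprime n.factorial) (hn : 2 ≤ n) :
    Regular (Set.univ : Set (GG h n)) := by
  intro p
  by_cases hex : ∃ g₀ : GG h n, act g₀ p = p ∧ (g₀.2.2 : Perm (Fin n)) = rho0 n
  · obtain ⟨g₀, hg₀, hρ₀⟩ := hex
    refine ⟨g₀.2.1, isConj_rho0_of_act_eq_self hcop hn hg₀ hρ₀, fun g _ hg => ?_⟩
    rcases Omega.coe_eq_one_or_eq_rho0 g.2.2 with hρ | hρ
    · exact Or.inl ⟨snd_fst_eq_one_of_act_eq_self hcop hg hρ, hρ⟩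
    · refine Or.inr ⟨?_, hρ⟩
      rw [eq_inv_of_mul_eq_one_left (snd_fst_mul_eq_one_of_act_eq_self hcop hg hg₀ hρ hρ₀),
        inv_eq_of_mul_eq_one_right
          (snd_fst_mul_eq_one_of_act_eq_self hcop hg₀ hg₀ hρ₀ hρ₀)]
  · refine ⟨rho0 n, IsConj.refl _, fun g _ hg => ?_⟩
    rcases Omega.coe_eq_one_or_eq_rho0 g.2.2 with hρ | hρ
    · exact Or.inl ⟨snd_fst_eq_one_of_act_eq_self hcop hg hρ, hρ⟩
    · exact absurd ⟨g, hg, hρ⟩ hex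

end Coprime

def powProfile (h : ℕ) {n : ℕ} (ψ : Perm (Fin n)) : Profile h n := fun i => ψ ^ (i : ℕ)

theorem act_finRotate_powProfile {h n : ℕ} {ψ : Perm (Fin n)} (hψ : ψ ^ h = 1) :
    act (finRotate h, ψ, 1) (powProfile h ψ) = powProfile h ψ := by
  refine act_eq_self_iff.2 fun j => ?_
  cases h with
  | zero => exact j.elim0
  | succ k =>
    simp only [powProfile, coe_finRotate, OneMemClass.coe_one, mul_one]
    split_ifs with hj
    · rw [hj, pow_zero, Fin.val_last, ← pow_succ', hψ]
    · rw [pow_succ']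

theorem coprime_of_regular {h n : ℕ} (hn : 2 ≤ n)
    (hr : Regular {g : GG h n | (g.2.2 : Perm (Fin n)) = 1}) : h.Coprime n.factorial := by
  by_contra hcop
  obtain ⟨ψ, hψ1, hψ⟩ := exists_ne_one_pow_eq_one_of_not_coprime_card (G := Perm (Fin n))
    (k := h) (by rwa [Nat.card_perm, Nat.card_fin])
  obtain ⟨_, _, hstab⟩ := hr (powProfile h ψ)
  rcases hstab (finRotate h, ψ, 1) rfl (act_finRotate_powProfile hψ) with ⟨hψ1', -⟩ | ⟨-, hρ⟩
  · exact hψ1 hψ1'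
  · exact rho0_ne_one hn hρ.symm

theorem stmt15_general {h n : Nat} (hn : 2 ≤ n) :
    (Regular (Set.univ : Set (GG h n)) ↔
      Regular {g : GG h n | (g.2.2 : Equiv.Perm (Fin n)) = 1}) ∧
    (Regular (Set.univ : Set (GG h n)) ↔ Nat.gcd h n.factorial = 1) := by
  have hsub : Regular (Set.univ : Set (GG h n)) →
      Regular {g : GG h n | (g.2.2 : Perm (Fin n)) = 1} :=
    Regular.mono (Set.subset_univ _)
  exact ⟨⟨hsub, fun hr => regular_univ_of_coprime (coprime_of_regular hn hr) hn⟩,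
    ⟨fun hr => coprime_of_regular hn (hsub hr), fun hcop => regular_univ_of_coprime hcop hn⟩⟩

theorem stmt15 {h n : Nat} (hh : 2 ≤ h) (hn : 2 ≤ n) :
    (Regular (Set.univ : Set (GG h n)) ↔
      Regular {g : GG h n | (g.2.2 : Equiv.Perm (Fin n)) = 1}) ∧
    (Regular (Set.univ : Set (GG h n)) ↔ Nat.gcd h n.factorial = 1) :=
  stmt15_general hn
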